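/- arXiv:1309.6947 — 4 statements merged into one kernel-verified Lean document; each statement's English description precedes it below -/
import Mathlib

section
/- Let φ₁ and φ₂ be closed modal μ-calculus formulas in disjunctive form and f a bijective renaming of propositional variables such that φ₁ =_f φ₂ (syntactic equality modulo commutativity, idempotence, and f-renaming). Then for every labelled transition system and every propositional context ρ, [[φ₁]]ρ = [[φ₂]]ρ. -/
/-- A labelled transition system: a transition relation and an initial state. -/
structure LTS (σ : Type) (α : Type) where
  trans : σ → α → σ → Prop
  init : σ

/-- Modal μ-calculus formulas over action labels `α` and propositional variables `χ`. -/
inductive Form (α χ : Type) : Type where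
  | ff : Form α χ
  | tt : Form α χ
  | or : Form α χ → Form α χ → Form α χ
  | and : Form α χ → Form α χ → Form α χ
  | neg : Form α χ → Form α χ
  | dia : α → Form α χ → Form α χ
  | box : α → Form α χ → Form α χ
  | mu : χ → Form α χ → Form α χ
  | nu : χ → Form α χ → Form α χ
  | var : χ → Form α χ

/-- Semantics of the modal μ-calculus on an LTS, in a propositional context. -/
def sem {σ α χ : Type} [DecidableEq χ] (L : LTS σ α) : Form α χ → (χ → Set σ) → Set σ
  | Form.ff, _ => ∅
  | Form.tt, _ => Set.univ
  | Form.or φ₁ φ₂, ρ => sem L φ₁ ρ ∪ sem L φ₂ ρ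
  | Form.and φ₁ φ₂, ρ => sem L φ₁ ρ ∩ sem L φ₂ ρ
  | Form.neg φ₀, ρ => Set.univ \ sem L φ₀ ρ
  | Form.dia a φ₀, ρ => {s | ∃ s', L.trans s a s' ∧ s' ∈ sem L φ₀ ρ}
  | Form.box a φ₀, ρ => {s | ∀ s', L.trans s a s' → s' ∈ sem L φ₀ ρ}
  | Form.mu X φ₀, ρ => ⋂₀ {U : Set σ | sem L φ₀ (Function.update ρ X U) ⊆ U}
  | Form.nu X φ₀, ρ => ⋃₀ {U : Set σ | U ⊆ sem L φ₀ (Function.update ρ X U)}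
  | Form.var X, ρ => ρ X

/-- Free variables of a formula. -/
def fvF {α χ : Type} : Form α χ → Set χ
  | Form.ff => ∅
  | Form.tt => ∅
  | Form.or φ₁ φ₂ => fvF φ₁ ∪ fvF φ₂
  | Form.and φ₁ φ₂ => fvF φ₁ ∪ fvF φ₂
  | Form.neg φ₀ => fvF φ₀
  | Form.dia _ φ₀ => fvF φ₀
  | Form.box _ φ₀ => fvF φ₀
  | Form.mu X φ₀ => fvF φ₀ \ {X}
  | Form.nu X φ₀ => fvF φ₀ \ {X}
  | Form.var X => {X}

/-- Bound variables of a formula. -/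
def bvF {α χ : Type} : Form α χ → Set χ
  | Form.ff => ∅
  | Form.tt => ∅
  | Form.or φ₁ φ₂ => bvF φ₁ ∪ bvF φ₂
  | Form.and φ₁ φ₂ => bvF φ₁ ∪ bvF φ₂
  | Form.neg φ₀ => bvF φ₀
  | Form.dia _ φ₀ => bvF φ₀
  | Form.box _ φ₀ => bvF φ₀
  | Form.mu X φ₀ => insert X (bvF φ₀)
  | Form.nu X φ₀ => insert X (bvF φ₀)
  | Form.var _ => ∅

/-- A formula is in disjunctive form if it contains only `ff`, disjunctions,
possibility modalities, minimal fix-points, propositional variables and negations. -/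
def DisjForm {α χ : Type} : Form α χ → Prop
  | Form.ff => True
  | Form.tt => False
  | Form.or φ₁ φ₂ => DisjForm φ₁ ∧ DisjForm φ₂
  | Form.and _ _ => False
  | Form.neg φ₀ => DisjForm φ₀
  | Form.dia _ φ₀ => DisjForm φ₀
  | Form.box _ _ => False
  | Form.mu _ φ₀ => DisjForm φ₀
  | Form.nu _ _ => False
  | Form.var _ => True

/-- Syntactic equality modulo commutativity, idempotence and `f`-renaming, for
formulas in disjunctive form. -/
inductive EqModF {α χ : Type} (f : χ → χ) : Form α χ → Form α χ → Prop
  | ff : EqModF f Form.ff Form.ff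
  | neg {φ₀ φ₀'} : EqModF f φ₀ φ₀' → EqModF f (Form.neg φ₀) (Form.neg φ₀')
  | dia {a φ₀ φ₀'} : EqModF f φ₀ φ₀' → EqModF f (Form.dia a φ₀) (Form.dia a φ₀')
  | or {φ₁ φ₂ φ₁' φ₂'} : EqModF f φ₁ φ₁' → EqModF f φ₂ φ₂' →
      EqModF f (Form.or φ₁ φ₂) (Form.or φ₁' φ₂')
  | var (X : χ) : EqModF f (Form.var X) (Form.var (f X))
  | mu {X φ₀ φ₀'} : EqModF f φ₀ φ₀' → EqModF f (Form.mu X φ₀) (Form.mu (f X) φ₀')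
  | comm {φ₁ φ₂ φ₁' φ₂'} : EqModF f φ₁ φ₂' → EqModF f φ₂ φ₁' →
      EqModF f (Form.or φ₁ φ₂) (Form.or φ₂' φ₁')
  | idem_l {φ₀ φ₀'} : EqModF f φ₀ φ₀' → EqModF f (Form.or φ₀ φ₀) φ₀'
  | idem_r {φ₀ φ₀'} : EqModF f φ₀ φ₀' → EqModF f φ₀ (Form.or φ₀' φ₀')


theorem sem_eqModF_aux {σ α χ : Type} [DecidableEq χ] (L : LTS σ α)
    (f : χ → χ) (hf : Function.Injective f) {φ φ' : Form α χ}
    (h : EqModF f φ φ') : ∀ (ρ ρ' : χ → Set σ),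
    (∀ X ∈ fvF φ, ρ X = ρ' (f X)) → sem L φ ρ = sem L φ' ρ' := by
  induction h with
  | ff => intro ρ ρ' _; rfl
  | neg _ ih =>
    intro ρ ρ' hag
    simp only [sem, ih ρ ρ' hag]
  | dia _ ih =>
    intro ρ ρ' hag
    simp only [sem, ih ρ ρ' hag]
  | or _ _ ih₁ ih₂ =>
    intro ρ ρ' hag
    have h1 : ∀ X ∈ fvF _, ρ X = ρ' (f X) := fun X hX => hag X (Or.inl hX)
    have h2 : ∀ X ∈ fvF _, ρ X = ρ' (f X) := fun X hX => hag X (Or.inr hX)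
    simp only [sem, ih₁ ρ ρ' h1, ih₂ ρ ρ' h2]
  | var X =>
    intro ρ ρ' hag
    exact hag X rfl
  | @mu X φ₀ φ₀' _ ih =>
    intro ρ ρ' hag
    have hset : {U : Set σ | sem L φ₀ (Function.update ρ X U) ⊆ U}
        = {U : Set σ | sem L φ₀' (Function.update ρ' (f X) U) ⊆ U} := by
      ext U
      have : sem L φ₀ (Function.update ρ X U)
          = sem L φ₀' (Function.update ρ' (f X) U) := by
        apply ih
        intro Y hY
        by_cases hYX : Y = X
        · subst hYX; simp
        · rw [Function.update_of_ne hYX, Function.update_of_ne (fun hc => hYX (hf hc))]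
          exact hag Y ⟨hY, hYX⟩
      simp only [Set.mem_setOf_eq, this]
    simp only [sem, hset]
  | comm _ _ ih₁ ih₂ =>
    intro ρ ρ' hag
    have h1 : ∀ X ∈ fvF _, ρ X = ρ' (f X) := fun X hX => hag X (Or.inl hX)
    have h2 : ∀ X ∈ fvF _, ρ X = ρ' (f X) := fun X hX => hag X (Or.inr hX)
    show sem L _ ρ ∪ sem L _ ρ = sem L _ ρ' ∪ sem L _ ρ'
    rw [ih₁ ρ ρ' h1, ih₂ ρ ρ' h2, Set.union_comm]
  | idem_l _ ih =>
    intro ρ ρ' hag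
    have h1 : ∀ X ∈ fvF _, ρ X = ρ' (f X) := fun X hX => hag X (Or.inl hX)
    show sem L _ ρ ∪ sem L _ ρ = sem L _ ρ'
    rw [ih ρ ρ' h1, Set.union_self]
  | idem_r _ ih =>
    intro ρ ρ' hag
    show sem L _ ρ = sem L _ ρ' ∪ sem L _ ρ'
    rw [ih ρ ρ' hag, Set.union_self]

/-- Formulas in disjunctive form that are syntactically equal modulo commutativity,
idempotence and bijective renaming have the same semantics. -/
theorem sem_eqModF {σ α χ : Type} [DecidableEq χ] (L : LTS σ α)
    (f : χ → χ) (hf : Function.Bijective f) (φ₁ φ₂ : Form α χ)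
    (h₁ : DisjForm φ₁) (h₂ : DisjForm φ₂)
    (hc₁ : fvF φ₁ = ∅) (hc₂ : fvF φ₂ = ∅)
    (heq : EqModF f φ₁ φ₂) (ρ : χ → Set σ) :
    sem L φ₁ ρ = sem L φ₂ ρ := by
  apply sem_eqModF_aux L f hf.injective heq
  intro X hX
  rw [hc₁] at hX
  exact absurd hX (Set.notMem_empty X)
end

section
/- Let N = (S⃗, V) be a network of LTSs of size n and i ∈ 1..n, with α assigning a unique fresh label α(t⃗,a) to each rule (t⃗,a) ∈ V. Let V' = {((•,a),a) | (t⃗,a) ∈ V, i ∉ A(t⃗)} ∪ {((t⃗[i], α(t⃗,a)), a) | (t⃗,a) ∈ V, {i} ⊊ A(t⃗)} ∪ {((t⃗[i], •), a) | (t⃗,a) ∈ V, {i} = A(t⃗)}. Then the map s⃗ ↦ (s⃗[i], s⃗∖i) is an isomorphism of labelled transition systems between lts(N) and lts(((S⃗[i], lts(N∖i)), V')): it is a bijection on states mapping initial state to initial state such that s⃗ →a s⃗' in lts(N) if and only if (s⃗[i], s⃗∖i) →a (s⃗'[i], s⃗'∖i) in lts(((S⃗[i], lts(N∖i)), V')).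 -/
/-- A synchronisation vector: a label or `•` (i.e. `none`) for each index. -/
abbrev SyncVec (n : ℕ) (α : Type) : Type := Fin n → Option α

/-- A synchronisation rule: a synchronisation vector together with a result label. -/
abbrev SyncRule (n : ℕ) (α : Type) : Type := SyncVec n α × α

/-- The set of active indices of a synchronisation vector. -/
def Active {n : ℕ} {α : Type} (t : SyncVec n α) : Set (Fin n) := {i | t i ≠ none}

/-- The global LTS of a network of LTSs. -/
def netLTS {n : ℕ} {α : Type} {σ : Fin n → Type} (S : ∀ i, LTS (σ i) α)
    (V : List (SyncRule n α)) : LTS (∀ i, σ i) α where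
  init := fun i => (S i).init
  trans := fun s a s' => ∃ r ∈ V, r.2 = a ∧
    ∀ i, (r.1 i = none → s' i = s i) ∧
      ∀ b, r.1 i = some b → (S i).trans (s i) b (s' i)

/-- Projection of a synchronisation vector removing index `i`. -/
def subVec {n : ℕ} {α : Type} (i : Fin (n + 1)) (t : SyncVec (n + 1) α) : SyncVec n α :=
  fun j => t (i.succAbove j)

/-- `alab` assigns a unique unused label to each synchronisation rule. -/
def FreshLabels {n : ℕ} {α : Type} (V : List (SyncRule n α)) (alab : SyncRule n α → α) : Prop :=
  Function.Injective alab ∧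
  ∀ r ∈ V, ∀ r' ∈ V, alab r ≠ r'.2 ∧ ∀ j, r'.1 j ≠ some (alab r)

/-- The synchronisation rules of the sub-network `N∖i`. -/
def subRules {n : ℕ} {α : Type} [DecidableEq α] (i : Fin (n + 1))
    (V : List (SyncRule (n + 1) α)) (alab : SyncRule (n + 1) α → α) :
    List (SyncRule n α) :=
  V.filterMap fun r =>
    if r.1 i = none then some (subVec i r.1, r.2)
    else if ∃ j, j ≠ i ∧ r.1 j ≠ none then some (subVec i r.1, alab r)
    else none

/-- The global LTS of a network of two LTSs (with possibly heterogeneous label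
types), given by synchronisation rules on pairs. -/
def pairLTS {σ₁ σ₂ β₁ β₂ β₃ : Type} (L₁ : LTS σ₁ β₁) (L₂ : LTS σ₂ β₂)
    (W : List ((Option β₁ × Option β₂) × β₃)) : LTS (σ₁ × σ₂) β₃ where
  init := (L₁.init, L₂.init)
  trans := fun s c s' => ∃ r ∈ W, r.2 = c ∧
    (r.1.1 = none → s'.1 = s.1) ∧ (∀ b, r.1.1 = some b → L₁.trans s.1 b s'.1) ∧
    (r.1.2 = none → s'.2 = s.2) ∧ (∀ b, r.1.2 = some b → L₂.trans s.2 b s'.2)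

/-- The rules `V'` defining the interactions between `S⃗[i]` and `N∖i`. -/
def pairRules {n : ℕ} {α : Type} [DecidableEq α] (i : Fin (n + 1))
    (V : List (SyncRule (n + 1) α)) (alab : SyncRule (n + 1) α → α) :
    List ((Option α × Option α) × α) :=
  V.map fun r =>
    if r.1 i = none then ((none, some r.2), r.2)
    else if ∃ j, j ≠ i ∧ r.1 j ≠ none then ((r.1 i, some (alab r)), r.2)
    else ((r.1 i, none), r.2)

/-- A network is semantically equivalent to the composition of its `i`-th LTS with
the sub-network `N∖i` via the rules `V'`: the map `s⃗ ↦ (s⃗[i], s⃗∖i)` is an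
isomorphism of LTSs between `lts(N)` and `lts(((S⃗[i], lts(N∖i)), V'))`. -/
theorem subnetwork_extraction {α : Type} [DecidableEq α] {n : ℕ}
    {σ : Fin (n + 1) → Type} (S : ∀ j, LTS (σ j) α)
    (V : List (SyncRule (n + 1) α)) (alab : SyncRule (n + 1) α → α)
    (hfresh : FreshLabels V alab) (i : Fin (n + 1)) :
    Function.Bijective (fun s : (∀ j, σ j) =>
      ((s i, fun j => s (i.succAbove j)) : σ i × ∀ j : Fin n, σ (i.succAbove j))) ∧
    ((netLTS S V).init i, fun j => (netLTS S V).init (i.succAbove j))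
      = (pairLTS (S i) (netLTS (fun j => S (i.succAbove j)) (subRules i V alab))
          (pairRules i V alab)).init ∧
    ∀ (s : ∀ j, σ j) (a : α) (s' : ∀ j, σ j),
      (netLTS S V).trans s a s' ↔
      (pairLTS (S i) (netLTS (fun j => S (i.succAbove j)) (subRules i V alab))
          (pairRules i V alab)).trans
        (s i, fun j => s (i.succAbove j)) a (s' i, fun j => s' (i.succAbove j)) := by
  refine ⟨⟨?_, ?_⟩, rfl, ?_⟩
  · -- injective
    intro s t h
    obtain ⟨h1, h2⟩ := Prod.mk.injEq .. ▸ h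
    funext k
    by_cases hk : k = i
    · subst hk; exact h1
    · obtain ⟨j, rfl⟩ := Fin.exists_succAbove_eq hk
      exact congrFun h2 j
  · -- surjective
    rintro ⟨x, f⟩
    refine ⟨i.insertNth x f, ?_⟩
    simp [Fin.insertNth_apply_same, Fin.insertNth_apply_succAbove]
  intro s a s'
  constructor
  · rintro ⟨r, hrV, ha, hcond⟩
    by_cases h0 : r.1 i = none
    · refine ⟨((none, some r.2), r.2), List.mem_map.mpr ⟨r, hrV, by rw [if_pos h0]⟩, ha, ?_, ?_, ?_, ?_⟩
      · intro _; exact (hcond i).1 h0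
      · intro b hb; cases hb
      · intro h; cases h
      · intro b hb
        obtain rfl : r.2 = b := by injection hb
        refine ⟨(subVec i r.1, r.2), List.mem_filterMap.mpr ⟨r, hrV, by rw [if_pos h0]⟩, rfl, ?_⟩
        intro j
        exact ⟨(hcond (i.succAbove j)).1, (hcond (i.succAbove j)).2⟩
    · by_cases hEx : ∃ j, j ≠ i ∧ r.1 j ≠ none
      · refine ⟨((r.1 i, some (alab r)), r.2),
          List.mem_map.mpr ⟨r, hrV, by rw [if_neg h0, if_pos hEx]⟩, ha, ?_, ?_, ?_, ?_⟩
        · intro h; exact absurd h h0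
        · intro b hb; exact (hcond i).2 b hb
        · intro h; cases h
        · intro b hb
          obtain rfl : alab r = b := by injection hb
          refine ⟨(subVec i r.1, alab r),
            List.mem_filterMap.mpr ⟨r, hrV, by rw [if_neg h0, if_pos hEx]⟩, rfl, ?_⟩
          intro j
          exact ⟨(hcond (i.succAbove j)).1, (hcond (i.succAbove j)).2⟩
      · refine ⟨((r.1 i, none), r.2),
          List.mem_map.mpr ⟨r, hrV, by rw [if_neg h0, if_neg hEx]⟩, ha, ?_, ?_, ?_, ?_⟩
        · intro h; exact absurd h h0
        · intro b hb; exact (hcond i).2 b hb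
        · intro _
          push_neg at hEx
          funext j
          exact (hcond (i.succAbove j)).1 ((hEx _ (i.succAbove_ne j)))
        · intro b hb; cases hb
  · rintro ⟨w, hw, hwa, hl0, hl1, hr0, hr1⟩
    obtain ⟨r, hrV, hwr⟩ := List.mem_map.mp hw
    by_cases h0 : r.1 i = none
    · rw [if_pos h0] at hwr
      subst hwr
      obtain rfl : r.2 = a := hwa
      obtain ⟨r', hr', hr'2, hsub⟩ := hr1 r.2 rfl
      obtain ⟨r'', hr''V, hr''eq⟩ := List.mem_filterMap.mp hr'
      by_cases h0' : r''.1 i = none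
      · rw [if_pos h0'] at hr''eq
        obtain rfl : (subVec i r''.1, r''.2) = r' := by injection hr''eq
        refine ⟨r'', hr''V, hr'2, ?_⟩
        intro k
        by_cases hk : k = i
        · subst hk
          exact ⟨fun _ => hl0 rfl, fun b hb => absurd hb (by rw [h0']; simp)⟩
        · obtain ⟨j, rfl⟩ := Fin.exists_succAbove_eq hk
          exact hsub j
      · rw [if_neg h0'] at hr''eq
        by_cases hEx' : ∃ j, j ≠ i ∧ r''.1 j ≠ none
        · rw [if_pos hEx'] at hr''eq
          obtain rfl : (subVec i r''.1, alab r'') = r' := by injection hr''eq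
          exact absurd hr'2 ((hfresh.2 r'' hr''V r hrV).1)
        · rw [if_neg hEx'] at hr''eq; cases hr''eq
    · rw [if_neg h0] at hwr
      by_cases hEx : ∃ j, j ≠ i ∧ r.1 j ≠ none
      · rw [if_pos hEx] at hwr
        subst hwr
        obtain rfl : r.2 = a := hwa
        obtain ⟨r', hr', hr'2, hsub⟩ := hr1 (alab r) rfl
        obtain ⟨r'', hr''V, hr''eq⟩ := List.mem_filterMap.mp hr'
        by_cases h0' : r''.1 i = none
        · rw [if_pos h0'] at hr''eq
          obtain rfl : (subVec i r''.1, r''.2) = r' := by injection hr''eq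
          exact absurd hr'2.symm ((hfresh.2 r hrV r'' hr''V).1)
        · rw [if_neg h0'] at hr''eq
          by_cases hEx' : ∃ j, j ≠ i ∧ r''.1 j ≠ none
          · rw [if_pos hEx'] at hr''eq
            obtain rfl : (subVec i r''.1, alab r'') = r' := by injection hr''eq
            obtain rfl : r'' = r := hfresh.1 hr'2
            refine ⟨r'', hrV, rfl, ?_⟩
            intro k
            by_cases hk : k = i
            · subst hk
              exact ⟨fun h => absurd h h0, fun b hb => hl1 b hb⟩
            · obtain ⟨j, rfl⟩ := Fin.exists_succAbove_eq hk
              exact hsub j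
          · rw [if_neg hEx'] at hr''eq; cases hr''eq
      · rw [if_neg hEx] at hwr
        subst hwr
        obtain rfl : r.2 = a := hwa
        refine ⟨r, hrV, rfl, ?_⟩
        push_neg at hEx
        intro k
        by_cases hk : k = i
        · subst hk
          exact ⟨fun h => absurd h h0, fun b hb => hl1 b hb⟩
        · obtain ⟨j, rfl⟩ := Fin.exists_succAbove_eq hk
          have hn : r.1 (i.succAbove j) = none := (hEx _ (i.succAbove_ne j))
          refine ⟨fun _ => congrFun (hr0 rfl) j, fun b hb => absurd hb (by rw [hn]; simp)⟩
end

section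
/- Let φ be a closed block-labelled modal μ-calculus formula in disjunctive form, N = (S⃗, V) a network of LTSs, i an index, and P = lts((enc(φ), S⃗[i]), V//ᵢ) the global LTS of the quotient formula network. If (ψ₁, s₁) →δ (ψₙ, sₙ) is a transition sequence of P with label sequence δ, then there exists a transition sequence ψ₁ →δ' ψₙ in enc(φ) such that the μ-projection of δ' (the subsequence of δ' consisting of its μᵏ-labels) is identical to the μ-projection of δ; moreover, if the transition sequence in P is a circuit, then δ' can be chosen such that the corresponding transition sequence in enc(φ) is also a circuit. -/
/-- Block-labelled modal μ-calculus formulas in disjunctive form: only `ff`,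
disjunction, possibility modalities, minimal fix-points, variables (labelled
with a block number) and negation. -/
inductive DForm (α χ : Type) : Type where
  | ff : DForm α χ
  | or : DForm α χ → DForm α χ → DForm α χ
  | neg : DForm α χ → DForm α χ
  | dia : α → DForm α χ → DForm α χ
  | mu : χ → ℕ → DForm α χ → DForm α χ
  | var : χ → ℕ → DForm α χ

/-- Labels of formula graphs: `∨`, `¬`, `⟨a⟩` and `μᵏ`. -/
inductive FLabel (α : Type) : Type where
  | or : FLabel α
  | neg : FLabel α
  | dia : α → FLabel α
  | mu : ℕ → FLabel α

/-- The binding sub-formula `φ[X]` of a variable named `X` (the binder `μX^k.ψ₀`),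
if any; unique when bound variables are distinct. -/
def findBinder {α χ : Type} [DecidableEq χ] : DForm α χ → χ → Option (DForm α χ)
  | DForm.ff, _ => none
  | DForm.or φ₁ φ₂, X => (findBinder φ₁ X).orElse (fun _ => findBinder φ₂ X)
  | DForm.neg φ₀, X => findBinder φ₀ X
  | DForm.dia _ φ₀, X => findBinder φ₀ X
  | DForm.mu Y k φ₀, X => if Y = X then some (DForm.mu Y k φ₀) else findBinder φ₀ X
  | DForm.var _ _, _ => none

/-- Free (block-labelled) variables. -/
def dfvD {α χ : Type} : DForm α χ → Set (χ × ℕ)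
  | DForm.ff => ∅
  | DForm.or φ₁ φ₂ => dfvD φ₁ ∪ dfvD φ₂
  | DForm.neg φ₀ => dfvD φ₀
  | DForm.dia _ φ₀ => dfvD φ₀
  | DForm.mu X k φ₀ => dfvD φ₀ \ {(X, k)}
  | DForm.var X k => {(X, k)}

/-- Bound (block-labelled) variables. -/
def dbvD {α χ : Type} : DForm α χ → Set (χ × ℕ)
  | DForm.ff => ∅
  | DForm.or φ₁ φ₂ => dbvD φ₁ ∪ dbvD φ₂
  | DForm.neg φ₀ => dbvD φ₀
  | DForm.dia _ φ₀ => dbvD φ₀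
  | DForm.mu X k φ₀ => insert (X, k) (dbvD φ₀)
  | DForm.var _ _ => ∅

/-- The list of all names bound in the formula. -/
def binderNames {α χ : Type} : DForm α χ → List χ
  | DForm.ff => []
  | DForm.or φ₁ φ₂ => binderNames φ₁ ++ binderNames φ₂
  | DForm.neg φ₀ => binderNames φ₀
  | DForm.dia _ φ₀ => binderNames φ₀
  | DForm.mu X _ φ₀ => X :: binderNames φ₀
  | DForm.var _ _ => []

/-- All bound variables have distinct names (and in particular each is bound once). -/
def DistinctBound {α χ : Type} (φ : DForm α χ) : Prop := (binderNames φ).Nodup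

/-- The list of block numbers occurring in the formula. -/
def blockList {α χ : Type} : DForm α χ → List ℕ
  | DForm.ff => []
  | DForm.or φ₁ φ₂ => blockList φ₁ ++ blockList φ₂
  | DForm.neg φ₀ => blockList φ₀
  | DForm.dia _ φ₀ => blockList φ₀
  | DForm.mu _ k φ₀ => k :: blockList φ₀
  | DForm.var _ k => [k]

/-- Disjunction of a list of formulas (`ff` for the empty list, the formula
itself for a singleton). -/
def bigOr {α χ : Type} : List (DForm α χ) → DForm α χ
  | [] => DForm.ff
  | d :: ds => ds.foldl DForm.or d

/-- `SubNeg φ b ψ`: `ψ` is a sub-formula of `φ`, with `b = true` iff the path from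
the root of `φ` to the occurrence of `ψ` traverses an even number of negations. -/
inductive SubNeg {α χ : Type} (φ : DForm α χ) : Bool → DForm α χ → Prop
  | refl : SubNeg φ true φ
  | or_l {b ψ₁ ψ₂} : SubNeg φ b (DForm.or ψ₁ ψ₂) → SubNeg φ b ψ₁
  | or_r {b ψ₁ ψ₂} : SubNeg φ b (DForm.or ψ₁ ψ₂) → SubNeg φ b ψ₂
  | neg {b ψ} : SubNeg φ b (DForm.neg ψ) → SubNeg φ (!b) ψ
  | dia {b a ψ} : SubNeg φ b (DForm.dia a ψ) → SubNeg φ b ψ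
  | mu {b X k ψ} : SubNeg φ b (DForm.mu X k ψ) → SubNeg φ b ψ

/-- Sub-formula relation. -/
def Subf {α χ : Type} (φ ψ : DForm α χ) : Prop := ∃ b, SubNeg φ b ψ

/-- The variable named `X` occurs (bound or free, as binder or as use) with block
number `k` in `φ`. -/
def VarOcc {α χ : Type} (φ : DForm α χ) (X : χ) (k : ℕ) : Prop :=
  Subf φ (DForm.var X k) ∨ ∃ ψ, Subf φ (DForm.mu X k ψ)

/-- Well-formedness of a block-labelling: (1) all occurrences of a variable carry
the same block number; (2) even block numbers are used exactly for binders
occurring under an even number of negations; (3) block numbers of free variables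
of a binding sub-formula do not exceed the block number of the binder. -/
def WFBL {α χ : Type} (φ : DForm α χ) : Prop :=
  (∀ X k k', VarOcc φ X k → VarOcc φ X k' → k = k') ∧
  (∀ (b : Bool) (X : χ) (k : ℕ) (ψ : DForm α χ),
    SubNeg φ b (DForm.mu X k ψ) → (Even k ↔ b = true)) ∧
  (∀ (X : χ) (k : ℕ) (ψ : DForm α χ),
    Subf φ (DForm.mu X k ψ) → ∀ p ∈ dfvD (DForm.mu X k ψ), p.2 ≤ k)

/-- Transitions of the formula graph `enc(φ)` encoding the formula `φ`. -/
inductive EncTrans {α χ : Type} [DecidableEq χ] (φ : DForm α χ) :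
    DForm α χ → FLabel α → DForm α χ → Prop
  | var {X : χ} {k : ℕ} {ψ : DForm α χ} :
      findBinder φ X = some ψ → EncTrans φ (DForm.var X k) FLabel.or ψ
  | neg (ψ : DForm α χ) : EncTrans φ (DForm.neg ψ) FLabel.neg ψ
  | dia (a : α) (ψ : DForm α χ) : EncTrans φ (DForm.dia a ψ) (FLabel.dia a) ψ
  | or_l (ψ₁ ψ₂ : DForm α χ) : EncTrans φ (DForm.or ψ₁ ψ₂) FLabel.or ψ₁
  | or_r (ψ₁ ψ₂ : DForm α χ) : EncTrans φ (DForm.or ψ₁ ψ₂) FLabel.or ψ₂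
  | mu (X : χ) (k : ℕ) (ψ : DForm α χ) :
      EncTrans φ (DForm.mu X k ψ) (FLabel.mu k) ψ

/-- The formula graph encoding `φ`: states are sub-formulas, initial state is `φ`. -/
def encLTS {α χ : Type} [DecidableEq χ] (φ : DForm α χ) : LTS (DForm α χ) (FLabel α) :=
  ⟨EncTrans φ, φ⟩

/-- The synchronisation rules `V//ᵢ` of the quotient formula network, composing a
formula graph (labels `FLabel α`, given the block numbers `ks` occurring in the
formula) with the `i`-th individual LTS of a network with rules `V`. -/
def quotRules {n : ℕ} {α : Type} [DecidableEq α] (ks : List ℕ)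
    (V : List (SyncRule n α)) (alab : SyncRule n α → α) (i : Fin n) :
    List ((Option (FLabel α) × Option α) × FLabel α) :=
  (((FLabel.neg : FLabel α) :: FLabel.or :: ks.map FLabel.mu).map fun c =>
      ((some c, none), c)) ++
  V.map fun r =>
    if r.1 i = none then ((some (FLabel.dia r.2), none), FLabel.dia r.2)
    else if ∃ j, j ≠ i ∧ r.1 j ≠ none then
      ((some (FLabel.dia r.2), r.1 i), FLabel.dia (alab r))
    else ((some (FLabel.dia r.2), r.1 i), FLabel.or)

/-- Paths of an LTS, recording the traversed labels. -/
inductive LPath {σ β : Type} (L : LTS σ β) : σ → List β → σ → Prop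
  | nil (s : σ) : LPath L s [] s
  | cons {s b s' δ s''} : L.trans s b s' → LPath L s' δ s'' → LPath L s (b :: δ) s''

/-- Paths using only transitions of the set `T`, recording the traversed labels. -/
inductive TPathIn {σ β : Type} (T : Set (σ × β × σ)) : σ → List β → σ → Prop
  | nil (s : σ) : TPathIn T s [] s
  | cons {s b s' δ s''} : (s, b, s') ∈ T → TPathIn T s' δ s'' → TPathIn T s (b :: δ) s''

/-- Paths of an LTS, recording the traversed transitions. -/
inductive TrPath {σ β : Type} (L : LTS σ β) : σ → List (σ × β × σ) → σ → Prop
  | nil (s : σ) : TrPath L s [] s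
  | cons {s b s' l s''} : L.trans s b s' → TrPath L s' l s'' →
      TrPath L s ((s, b, s') :: l) s''

/-- The states of a set of transitions. -/
def circuitStates {σ β : Type} (T : Set (σ × β × σ)) : Set σ :=
  {s | ∃ tr ∈ T, tr.1 = s ∨ tr.2.2 = s}

/-- `T` is a circuit: a set of transitions of `L` such that any two of its states
are connected by a sequence of transitions of `T`. -/
def IsCircuit {σ β : Type} (L : LTS σ β) (T : Set (σ × β × σ)) : Prop :=
  (∀ tr ∈ T, L.trans tr.1 tr.2.1 tr.2.2) ∧
  ∀ s ∈ circuitStates T, ∀ s' ∈ circuitStates T, ∃ δ, TPathIn T s δ s'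

/-- `s` is a root of the circuit `T`: a state of `T` reachable from the initial
state without traversing any transition of `T`. -/
def IsRoot {σ β : Type} (L : LTS σ β) (T : Set (σ × β × σ)) (s : σ) : Prop :=
  s ∈ circuitStates T ∧
  Relation.ReflTransGen (fun x y => ∃ b, L.trans x b y ∧ (x, b, y) ∉ T) L.init s

/-- Is the label a negation? -/
def isNegL {α : Type} : FLabel α → Bool
  | FLabel.neg => true
  | _ => false

/-- Is the label a `μᵏ` label? -/
def isMuL {α : Type} : FLabel α → Bool
  | FLabel.mu _ => true
  | _ => false

/-- Number of negation labels in a label sequence. -/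
def negCountL {α : Type} (δ : List (FLabel α)) : ℕ := δ.countP isNegL

/-- The μ-projection of a label sequence: the subsequence of its `μᵏ` labels. -/
def muProj {α : Type} (δ : List (FLabel α)) : List (FLabel α) := δ.filter isMuL

/-- Condition (1) of formula graphs: every label is `∨`, `¬`, `⟨a⟩` or `μᵏ`. -/
def FGcond1 {σ α : Type} (L : LTS σ (FLabel α)) : Prop :=
  ∀ s c s', L.trans s c s' →
    c = FLabel.or ∨ c = FLabel.neg ∨ (∃ a, c = FLabel.dia a) ∨ ∃ k, c = FLabel.mu k

/-- Condition (2) of formula graphs: on every path from the initial state ending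
with a `μᵏ`-transition, `k` is even iff the path contains an even number of `¬`. -/
def FGcond2 {σ α : Type} (L : LTS σ (FLabel α)) : Prop :=
  ∀ (δ : List (FLabel α)) (s : σ) (k : ℕ) (s' : σ),
    LPath L L.init δ s → L.trans s (FLabel.mu k) s' →
    (Even k ↔ Even (negCountL δ))

/-- Condition (3) of formula graphs: every rooted circuit contains a `μᵏ`-transition,
and the first `μ`-transition traversed from a root has a minimal block number. -/
def FGcond3 {σ α : Type} (L : LTS σ (FLabel α)) : Prop :=
  ∀ T : Set (σ × FLabel α × σ), IsCircuit L T → ∀ s, IsRoot L T s →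
    (∃ tr ∈ T, ∃ k, tr.2.1 = FLabel.mu k) ∧
    ∀ (δ : List (FLabel α)) (k' : ℕ) (s' : σ),
      TPathIn T s (δ ++ [FLabel.mu k']) s' → (∀ c ∈ δ, isMuL c = false) →
      ∀ x k y, (x, FLabel.mu k, y) ∈ T → k' ≤ k

/-! Transitions of the quotient LTS project onto transitions of `enc(φ)`: every rule of
`V//ᵢ` moves the formula component along an edge of `enc(φ)`, and only the rules
`((μᵏ, •), μᵏ)` carry or produce a `μ`-label. Projecting each transition to its
formula component therefore maps paths to paths, preserves the μ-projection, and
maps circuits to circuits. -/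

section MapTransitions

variable {σ τ β γ : Type}

def mapTr (f : σ → τ) (g : σ × β × σ → γ) (tr : σ × β × σ) : τ × γ × τ :=
  (f tr.1, g tr, f tr.2.2)

theorem TrPath.trans_of_mem {L : LTS σ β} {s s' : σ} {l : List (σ × β × σ)}
    (h : TrPath L s l s') : ∀ tr ∈ l, L.trans tr.1 tr.2.1 tr.2.2 := by
  induction h with
  | nil => simp
  | cons ht _ ih => exact List.forall_mem_cons.2 ⟨ht, ih⟩

variable {L : LTS σ β} {L' : LTS τ γ} {f : σ → τ} {g : σ × β × σ → γ}

theorem TrPath.map (hsim : ∀ s b s', L.trans s b s' → L'.trans (f s) (g (s, b, s')) (f s'))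
    {s s' : σ} {l : List (σ × β × σ)} (h : TrPath L s l s') :
    TrPath L' (f s) (l.map (mapTr f g)) (f s') := by
  induction h with
  | nil => exact TrPath.nil _
  | cons ht _ ih => exact TrPath.cons (hsim _ _ _ ht) ih

theorem TPathIn.image {T : Set (σ × β × σ)} {s s' : σ} {δ : List β} (h : TPathIn T s δ s') :
    ∃ δ', TPathIn (mapTr f g '' T) (f s) δ' (f s') := by
  induction h with
  | nil => exact ⟨[], TPathIn.nil _⟩
  | @cons s b s' _ _ hmem _ ih =>
    obtain ⟨δ', hδ'⟩ := ih
    exact ⟨g (s, b, s') :: δ', TPathIn.cons ⟨_, hmem, rfl⟩ hδ'⟩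

theorem circuitStates_image (T : Set (σ × β × σ)) :
    circuitStates (mapTr f g '' T) = f '' circuitStates T := by
  ext u
  simp only [circuitStates, Set.mem_image, Set.mem_ofPred_eq]
  constructor
  · rintro ⟨_, ⟨tr, htr, rfl⟩, hu | hu⟩
    exacts [⟨tr.1, ⟨tr, htr, Or.inl rfl⟩, hu⟩, ⟨tr.2.2, ⟨tr, htr, Or.inr rfl⟩, hu⟩]
  · rintro ⟨s, ⟨tr, htr, hs | hs⟩, rfl⟩ <;> subst hs
    exacts [⟨_, ⟨tr, htr, rfl⟩, Or.inl rfl⟩, ⟨_, ⟨tr, htr, rfl⟩, Or.inr rfl⟩]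

theorem IsCircuit.image
    (hsim : ∀ s b s', L.trans s b s' → L'.trans (f s) (g (s, b, s')) (f s'))
    {T : Set (σ × β × σ)} (hT : IsCircuit L T) : IsCircuit L' (mapTr f g '' T) := by
  refine ⟨?_, ?_⟩
  · rintro _ ⟨tr, htr, rfl⟩
    exact hsim _ _ _ (hT.1 tr htr)
  · rw [circuitStates_image]
    rintro _ ⟨s, hs, rfl⟩ _ ⟨s', hs', rfl⟩
    obtain ⟨δ, hδ⟩ := hT.2 s hs s' hs'
    exact hδ.image

end MapTransitions

theorem muProj_cons {α : Type} (c : FLabel α) (δ : List (FLabel α)) :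
    muProj (c :: δ) = muProj [c] ++ muProj δ :=
  List.filter_append [c] δ

theorem muProj_map_congr {α ι : Type} {f g : ι → FLabel α} {l : List ι}
    (h : ∀ x ∈ l, muProj [f x] = muProj [g x]) : muProj (l.map f) = muProj (l.map g) := by
  induction l with
  | nil => rfl
  | cons x l ih =>
    rw [List.forall_mem_cons] at h
    rw [List.map_cons, List.map_cons, muProj_cons (f x), muProj_cons (g x), h.1, ih h.2]

/-- The label of every transition leaving `ψ` in `enc(φ)` (`ff` has none). -/
def DForm.encLabel {α χ : Type} : DForm α χ → FLabel α
  | DForm.neg _ => FLabel.neg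
  | DForm.dia a _ => FLabel.dia a
  | DForm.mu _ k _ => FLabel.mu k
  | _ => FLabel.or

theorem EncTrans.label_eq {α χ : Type} [DecidableEq χ] {φ ψ ψ' : DForm α χ} {c : FLabel α}
    (h : EncTrans φ ψ c ψ') : c = ψ.encLabel := by
  cases h <;> rfl

theorem quotRules_trans_fst {α χ : Type} [DecidableEq α] [DecidableEq χ] {n : ℕ}
    {σ : Fin n → Type} {S : ∀ j, LTS (σ j) α} {V : List (SyncRule n α)}
    {alab : SyncRule n α → α} {i : Fin n} {φ : DForm α χ} {p p' : DForm α χ × σ i}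
    {c : FLabel α}
    (h : (pairLTS (encLTS φ) (S i) (quotRules (blockList φ) V alab i)).trans p c p') :
    EncTrans φ p.1 p.1.encLabel p'.1 ∧ muProj [p.1.encLabel] = muProj [c] := by
  suffices ∃ c', EncTrans φ p.1 c' p'.1 ∧ muProj [c'] = muProj [c] by
    obtain ⟨c', hc', hmu⟩ := this
    rw [← hc'.label_eq]
    exact ⟨hc', hmu⟩
  obtain ⟨r, hr, rfl, -, henc, -⟩ := h
  rcases List.mem_append.1 hr with hr | hr
  · obtain ⟨c, -, rfl⟩ := List.mem_map.1 hr
    exact ⟨c, henc c rfl, rfl⟩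
  · obtain ⟨v, -, rfl⟩ := List.mem_map.1 hr
    refine ⟨FLabel.dia v.2, ?_, ?_⟩ <;> split_ifs at henc ⊢ <;>
      first | exact henc _ rfl | rfl

theorem quotient_path_lifting_general {α χ : Type} [DecidableEq α] [DecidableEq χ] {n : ℕ}
    {σ : Fin n → Type} (S : ∀ j, LTS (σ j) α)
    (V : List (SyncRule n α)) (alab : SyncRule n α → α)
    (i : Fin n)
    (φ : DForm α χ)
    (p₁ p₂ : DForm α χ × σ i)
    (l : List ((DForm α χ × σ i) × FLabel α × (DForm α χ × σ i)))
    (hpath : TrPath (pairLTS (encLTS φ) (S i) (quotRules (blockList φ) V alab i))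
              p₁ l p₂) :
    ∃ l' : List (DForm α χ × FLabel α × DForm α χ),
      TrPath (encLTS φ) p₁.1 l' p₂.1 ∧
      muProj (l'.map fun tr => tr.2.1) = muProj (l.map fun tr => tr.2.1) ∧
      (IsCircuit (pairLTS (encLTS φ) (S i) (quotRules (blockList φ) V alab i))
          {tr | tr ∈ l} →
        IsCircuit (encLTS φ) {tr | tr ∈ l'}) := by
  let proj := mapTr (β := FLabel α) (Prod.fst : DForm α χ × σ i → DForm α χ)
    fun tr => tr.1.1.encLabel
  have hsim : ∀ p c p',
      (pairLTS (encLTS φ) (S i) (quotRules (blockList φ) V alab i)).trans p c p' →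
      EncTrans φ p.1 p.1.encLabel p'.1 :=
    fun _ _ _ h => (quotRules_trans_fst h).1
  refine ⟨l.map proj, hpath.map hsim, ?_, fun hcirc => ?_⟩
  · rw [List.map_map]
    exact muProj_map_congr fun tr htr => (quotRules_trans_fst (hpath.trans_of_mem tr htr)).2
  · have himage : {tr | tr ∈ l.map proj} = proj '' {tr | tr ∈ l} := by
      ext; simp
    rw [himage]
    exact hcirc.image hsim

/-- Every transition sequence `(ψ₁, s₁) →δ (ψₙ, sₙ)` of the LTS of the quotient
formula network can be matched by a transition sequence `ψ₁ →δ' ψₙ` of `enc(φ)`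
with the same μ-projection; moreover if the former is a circuit then `δ'` can be
chosen so that the latter is also a circuit. -/
theorem quotient_path_lifting {α χ : Type} [DecidableEq α] [DecidableEq χ] {n : ℕ}
    {σ : Fin n → Type} (S : ∀ j, LTS (σ j) α)
    (V : List (SyncRule n α)) (alab : SyncRule n α → α)
    (hfresh : FreshLabels V alab) (i : Fin n)
    (φ : DForm α χ) (hclosed : dfvD φ = ∅)
    (p₁ p₂ : DForm α χ × σ i)
    (l : List ((DForm α χ × σ i) × FLabel α × (DForm α χ × σ i)))
    (hpath : TrPath (pairLTS (encLTS φ) (S i) (quotRules (blockList φ) V alab i))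
              p₁ l p₂) :
    ∃ l' : List (DForm α χ × FLabel α × DForm α χ),
      TrPath (encLTS φ) p₁.1 l' p₂.1 ∧
      muProj (l'.map fun tr => tr.2.1) = muProj (l.map fun tr => tr.2.1) ∧
      (IsCircuit (pairLTS (encLTS φ) (S i) (quotRules (blockList φ) V alab i))
          {tr | tr ∈ l} →
        IsCircuit (encLTS φ) {tr | tr ∈ l'}) :=
  quotient_path_lifting_general S V alab i φ p₁ p₂ l hpath
end

section
/- For every closed, unlabelled modal μ-calculus formula φ in disjunctive form with distinct bound variables, the block-labelled formula bl(φ, tt, 0, []) is well-formed: (1) all occurrences of a variable carry the same block number; (2) all variables sharing the same block number have the same fix-point sign, with even block numbers assigned exactly to variables whose binder occurs under an even number of negations; (3) for every Xᵏ ∈ bv(bl(φ, tt, 0, [])) and every Y^{k'} free in the binding sub-formula of Xᵏ, k' ≤ k. Moreover, erasing the block labels of bl(φ, tt, 0, []) yields φ. -/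
/-- Unlabelled modal μ-calculus formulas in disjunctive form. -/
inductive UForm (α χ : Type) : Type where
  | ff : UForm α χ
  | or : UForm α χ → UForm α χ → UForm α χ
  | neg : UForm α χ → UForm α χ
  | dia : α → UForm α χ → UForm α χ
  | mu : χ → UForm α χ → UForm α χ
  | var : χ → UForm α χ

/-- Free variables of an unlabelled formula. -/
def ufv {α χ : Type} : UForm α χ → Set χ
  | UForm.ff => ∅
  | UForm.or φ₁ φ₂ => ufv φ₁ ∪ ufv φ₂
  | UForm.neg φ₀ => ufv φ₀
  | UForm.dia _ φ₀ => ufv φ₀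
  | UForm.mu X φ₀ => ufv φ₀ \ {X}
  | UForm.var X => {X}

/-- The list of all names bound in an unlabelled formula. -/
def ubinderNames {α χ : Type} : UForm α χ → List χ
  | UForm.ff => []
  | UForm.or φ₁ φ₂ => ubinderNames φ₁ ++ ubinderNames φ₂
  | UForm.neg φ₀ => ubinderNames φ₀
  | UForm.dia _ φ₀ => ubinderNames φ₀
  | UForm.mu X φ₀ => X :: ubinderNames φ₀
  | UForm.var _ => []

/-- The block-labelling function `bl(ψ, b, k, γ)`. -/
def bl {α χ : Type} [DecidableEq χ] : UForm α χ → Bool → ℕ → (χ → ℕ) → DForm α χ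
  | UForm.ff, _, _, _ => DForm.ff
  | UForm.var X, _, _, γ => DForm.var X (γ X)
  | UForm.neg φ₀, b, k, γ => DForm.neg (bl φ₀ (!b) k γ)
  | UForm.or φ₁ φ₂, b, k, γ => DForm.or (bl φ₁ b k γ) (bl φ₂ b k γ)
  | UForm.dia a φ₀, b, k, γ => DForm.dia a (bl φ₀ b k γ)
  | UForm.mu X φ₀, b, k, γ =>
    if b then DForm.mu X k (bl φ₀ true k (Function.update γ X k))
    else DForm.mu X (k + 1) (bl φ₀ true (k + 1) (Function.update γ X (k + 1)))

/-- Erasing the block labels of a block-labelled formula. -/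
def eraseD {α χ : Type} : DForm α χ → UForm α χ
  | DForm.ff => UForm.ff
  | DForm.or φ₁ φ₂ => UForm.or (eraseD φ₁) (eraseD φ₂)
  | DForm.neg φ₀ => UForm.neg (eraseD φ₀)
  | DForm.dia a φ₀ => UForm.dia a (eraseD φ₀)
  | DForm.mu X _ φ₀ => UForm.mu X (eraseD φ₀)
  | DForm.var X _ => UForm.var X

namespace DForm

variable {α χ : Type}

/-- Immediate sub-formulas, tagged `true` when the edge to them crosses a negation. -/
def children : DForm α χ → List (Bool × DForm α χ)
  | ff => []
  | or φ₁ φ₂ => [(false, φ₁), (false, φ₂)]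
  | neg φ₀ => [(true, φ₀)]
  | dia _ φ₀ => [(false, φ₀)]
  | mu _ _ φ₀ => [(false, φ₀)]
  | var _ _ => []

end DForm

namespace SubNeg

variable {α χ : Type} {φ φ₀ φ₁ φ₂ ψ : DForm α χ} {b : Bool}

theorem eq_or_child (h : SubNeg φ b ψ) :
    (b = true ∧ ψ = φ) ∨ ∃ n c, (n, c) ∈ φ.children ∧ SubNeg c (b ^^ n) ψ := by
  induction h with
  | refl => exact .inl ⟨rfl, rfl⟩
  | or_l _ ih =>
    rcases ih with ⟨rfl, rfl⟩ | ⟨n, c, hc, h⟩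
    · exact .inr ⟨false, _, by simp [DForm.children], .refl⟩
    · exact .inr ⟨n, c, hc, h.or_l⟩
  | or_r _ ih =>
    rcases ih with ⟨rfl, rfl⟩ | ⟨n, c, hc, h⟩
    · exact .inr ⟨false, _, by simp [DForm.children], .refl⟩
    · exact .inr ⟨n, c, hc, h.or_r⟩
  | neg _ ih =>
    rcases ih with ⟨rfl, rfl⟩ | ⟨n, c, hc, h⟩
    · exact .inr ⟨true, _, by simp [DForm.children], .refl⟩
    · exact .inr ⟨n, c, hc, by simpa using h.neg⟩
  | dia _ ih =>
    rcases ih with ⟨rfl, rfl⟩ | ⟨n, c, hc, h⟩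
    · exact .inr ⟨false, _, by simp [DForm.children], .refl⟩
    · exact .inr ⟨n, c, hc, h.dia⟩
  | mu _ ih =>
    rcases ih with ⟨rfl, rfl⟩ | ⟨n, c, hc, h⟩
    · exact .inr ⟨false, _, by simp [DForm.children], .refl⟩
    · exact .inr ⟨n, c, hc, h.mu⟩

theorem of_ff (h : SubNeg .ff b ψ) : b = true ∧ ψ = .ff := by
  simpa [DForm.children] using h.eq_or_child

theorem of_var {X : χ} {k : ℕ} (h : SubNeg (.var X k) b ψ) : b = true ∧ ψ = .var X k := by
  simpa [DForm.children] using h.eq_or_child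

theorem of_or (h : SubNeg (.or φ₁ φ₂) b ψ) :
    (b = true ∧ ψ = .or φ₁ φ₂) ∨ SubNeg φ₁ b ψ ∨ SubNeg φ₂ b ψ := by
  simpa [DForm.children] using h.eq_or_child

theorem of_neg (h : SubNeg (.neg φ₀) b ψ) : (b = true ∧ ψ = .neg φ₀) ∨ SubNeg φ₀ (!b) ψ := by
  simpa [DForm.children] using h.eq_or_child

theorem of_dia {a : α} (h : SubNeg (.dia a φ₀) b ψ) :
    (b = true ∧ ψ = .dia a φ₀) ∨ SubNeg φ₀ b ψ := by
  simpa [DForm.children] using h.eq_or_child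

theorem of_mu {X : χ} {k : ℕ} (h : SubNeg (.mu X k φ₀) b ψ) :
    (b = true ∧ ψ = .mu X k φ₀) ∨ SubNeg φ₀ b ψ := by
  simpa [DForm.children] using h.eq_or_child

end SubNeg

namespace VarOcc

variable {α χ : Type} {φ φ₀ φ₁ φ₂ : DForm α χ} {X : χ} {k : ℕ}

theorem eq_or_child (h : VarOcc φ X k) :
    (φ = .var X k ∨ ∃ ρ, φ = .mu X k ρ) ∨ ∃ n c, (n, c) ∈ φ.children ∧ VarOcc c X k := by
  rcases h with ⟨b, h⟩ | ⟨ρ, b, h⟩ <;> rcases h.eq_or_child with ⟨-, rfl⟩ | ⟨n, c, hc, h⟩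
  · exact .inl (.inl rfl)
  · exact .inr ⟨n, c, hc, .inl ⟨_, h⟩⟩
  · exact .inl (.inr ⟨ρ, rfl⟩)
  · exact .inr ⟨n, c, hc, .inr ⟨ρ, _, h⟩⟩

theorem not_ff : ¬VarOcc (.ff : DForm α χ) X k := fun h => by
  simpa [DForm.children] using h.eq_or_child

theorem of_var {Y : χ} {m : ℕ} (h : VarOcc (.var Y m : DForm α χ) X k) : X = Y ∧ k = m := by
  simpa [DForm.children, eq_comm] using h.eq_or_child

theorem of_or (h : VarOcc (.or φ₁ φ₂) X k) : VarOcc φ₁ X k ∨ VarOcc φ₂ X k := by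
  simpa [DForm.children] using h.eq_or_child

theorem of_neg (h : VarOcc (.neg φ₀) X k) : VarOcc φ₀ X k := by
  simpa [DForm.children] using h.eq_or_child

theorem of_dia {a : α} (h : VarOcc (.dia a φ₀) X k) : VarOcc φ₀ X k := by
  simpa [DForm.children] using h.eq_or_child

theorem of_mu {Y : χ} {m : ℕ} (h : VarOcc (.mu Y m φ₀) X k) : (X = Y ∧ k = m) ∨ VarOcc φ₀ X k := by
  simpa [DForm.children, eq_comm] using h.eq_or_child

end VarOcc

section Labelling

variable {α χ : Type} [DecidableEq χ]

theorem eraseD_bl (ψ : UForm α χ) (b : Bool) (k : ℕ) (γ : χ → ℕ) : eraseD (bl ψ b k γ) = ψ := by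
  induction ψ generalizing b k γ with
  | ff | var => rfl
  | or ψ₁ ψ₂ ih₁ ih₂ => simp [bl, eraseD, ih₁, ih₂]
  | neg ψ₀ ih | dia _ ψ₀ ih => simp [bl, eraseD, ih]
  | mu X ψ₀ ih => cases b <;> simp [bl, eraseD, ih]

theorem bl_mu_eq (X : χ) (ψ : UForm α χ) (b : Bool) (k : ℕ) (γ : χ → ℕ) :
    ∃ K, k ≤ K ∧ (Even K ↔ (Even k ↔ b = true)) ∧
      bl (.mu X ψ) b k γ = .mu X K (bl ψ true K (Function.update γ X K)) := by
  cases b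
  · exact ⟨k + 1, k.le_succ, by simp [Nat.even_add_one], rfl⟩
  · exact ⟨k, le_rfl, by simp, rfl⟩

theorem mem_dfvD_bl {ψ : UForm α χ} {b : Bool} {k : ℕ} {γ : χ → ℕ} {p : χ × ℕ}
    (hp : p ∈ dfvD (bl ψ b k γ)) : p.1 ∈ ufv ψ ∧ p.2 = γ p.1 := by
  induction ψ generalizing b k γ with
  | ff => simp [bl, dfvD] at hp
  | var Y => simp only [bl, dfvD, Set.mem_singleton_iff] at hp; simp [hp, ufv]
  | or ψ₁ ψ₂ ih₁ ih₂ =>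
    rcases hp with hp | hp
    · exact ⟨.inl (ih₁ hp).1, (ih₁ hp).2⟩
    · exact ⟨.inr (ih₂ hp).1, (ih₂ hp).2⟩
  | neg ψ₀ ih => exact ih hp
  | dia a ψ₀ ih => exact ih hp
  | mu Y ψ₀ ih =>
    obtain ⟨K, -, -, hbl⟩ := bl_mu_eq Y ψ₀ b k γ
    rw [hbl] at hp
    obtain ⟨hp, hpY⟩ := hp
    obtain ⟨hfree, hlabel⟩ := ih hp
    have hne : p.1 ≠ Y := by
      rintro hY
      exact hpY (Prod.ext hY (by simpa [hY] using hlabel))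
    exact ⟨⟨hfree, hne⟩, by simpa [hne] using hlabel⟩

theorem subNeg_bl_mu_wellLabelled {ψ : UForm α χ} {b t s : Bool} {k m : ℕ} {γ : χ → ℕ} {X : χ}
    {ρ : DForm α χ} (hk : Even k ↔ b = t) (hγ : ∀ Y ∈ ufv ψ, γ Y ≤ k)
    (h : SubNeg (bl ψ b k γ) s (.mu X m ρ)) :
    (Even m ↔ s = t) ∧ ∀ p ∈ dfvD (.mu X m ρ), p.2 ≤ m := by
  induction ψ generalizing b t s k γ with
  | ff => cases (SubNeg.of_ff h).2
  | var Y => cases (SubNeg.of_var h).2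
  | or ψ₁ ψ₂ ih₁ ih₂ =>
    rcases SubNeg.of_or h with ⟨-, he⟩ | h | h
    · cases he
    · exact ih₁ hk (fun Y hY => hγ Y (.inl hY)) h
    · exact ih₂ hk (fun Y hY => hγ Y (.inr hY)) h
  | neg ψ₀ ih =>
    rcases SubNeg.of_neg h with ⟨-, he⟩ | h
    · cases he
    · simpa using ih (t := !t) (by simpa using hk) hγ h
  | dia a ψ₀ ih =>
    rcases SubNeg.of_dia h with ⟨-, he⟩ | h
    · cases he
    · exact ih hk hγ h
  | mu Y ψ₀ ih =>
    obtain ⟨K, hkK, hK, hbl⟩ := bl_mu_eq Y ψ₀ b k γ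
    rw [hbl] at h
    have hK' : Even K ↔ true = t := by cases b <;> cases t <;> simp_all
    have hγ' : ∀ Z ∈ ufv ψ₀, Function.update γ Y K Z ≤ K := by
      intro Z hZ
      by_cases hZY : Z = Y
      · simp [hZY]
      · simpa [hZY] using (hγ Z ⟨hZ, hZY⟩).trans hkK
    rcases SubNeg.of_mu h with ⟨rfl, he⟩ | h
    · obtain ⟨rfl, rfl, rfl⟩ := DForm.mu.inj he
      refine ⟨hK', fun p hp => ?_⟩
      obtain ⟨hfree, hlabel⟩ := mem_dfvD_bl hp.1
      exact hlabel ▸ hγ' p.1 hfree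
    · exact ih hK' hγ' h

theorem varOcc_bl_of_notMem {ψ : UForm α χ} {b : Bool} {k j : ℕ} {γ : χ → ℕ} {X : χ}
    (h : VarOcc (bl ψ b k γ) X j) (hX : X ∉ ubinderNames ψ) : X ∈ ufv ψ ∧ j = γ X := by
  induction ψ generalizing b k γ with
  | ff => exact (VarOcc.not_ff h).elim
  | var Y =>
    obtain ⟨rfl, rfl⟩ := VarOcc.of_var h
    exact ⟨rfl, rfl⟩
  | or ψ₁ ψ₂ ih₁ ih₂ =>
    simp only [ubinderNames, List.mem_append, not_or] at hX
    rcases VarOcc.of_or h with h | h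
    · exact ⟨.inl (ih₁ h hX.1).1, (ih₁ h hX.1).2⟩
    · exact ⟨.inr (ih₂ h hX.2).1, (ih₂ h hX.2).2⟩
  | neg ψ₀ ih => exact ih (VarOcc.of_neg h) hX
  | dia a ψ₀ ih => exact ih (VarOcc.of_dia h) hX
  | mu Y ψ₀ ih =>
    simp only [ubinderNames, List.mem_cons, not_or] at hX
    obtain ⟨K, -, -, hbl⟩ := bl_mu_eq Y ψ₀ b k γ
    rw [hbl] at h
    rcases VarOcc.of_mu h with ⟨hXY, -⟩ | h
    · exact (hX.1 hXY).elim
    · obtain ⟨hfree, hlabel⟩ := ih h hX.2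
      exact ⟨⟨hfree, hX.1⟩, by simpa [hX.1] using hlabel⟩

theorem mem_ufv_or_mem_ubinderNames_of_varOcc {ψ : UForm α χ} {b : Bool} {k j : ℕ} {γ : χ → ℕ} {X : χ}
    (h : VarOcc (bl ψ b k γ) X j) : X ∈ ufv ψ ∨ X ∈ ubinderNames ψ := by
  by_cases hX : X ∈ ubinderNames ψ
  · exact .inr hX
  · exact .inl (varOcc_bl_of_notMem h hX).1

theorem varOcc_bl_unique {ψ : UForm α χ} {b : Bool} {k j j' : ℕ} {γ : χ → ℕ} {X : χ}
    (hnd : (ubinderNames ψ).Nodup) (hfree : ∀ Y ∈ ufv ψ, Y ∉ ubinderNames ψ)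
    (h : VarOcc (bl ψ b k γ) X j) (h' : VarOcc (bl ψ b k γ) X j') : j = j' := by
  induction ψ generalizing b k γ j j' with
  | ff => exact (VarOcc.not_ff h).elim
  | var Y => rw [(VarOcc.of_var h).2, (VarOcc.of_var h').2]
  | or ψ₁ ψ₂ ih₁ ih₂ =>
    obtain ⟨hnd₁, hnd₂, hdisj⟩ := List.nodup_append.1 hnd
    have cross : ∀ {i i'}, VarOcc (bl ψ₁ b k γ) X i → VarOcc (bl ψ₂ b k γ) X i' → i = i' := by
      intro i i' h₁ h₂
      have hX₂ : X ∉ ubinderNames ψ₂ := fun hb₂ => by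
        rcases mem_ufv_or_mem_ubinderNames_of_varOcc h₁ with hf₁ | hb₁
        · exact hfree X (.inl hf₁) (List.mem_append_right _ hb₂)
        · exact hdisj X hb₁ X hb₂ rfl
      have hX₁ : X ∉ ubinderNames ψ₁ := fun hb₁ =>
        hfree X (.inr (varOcc_bl_of_notMem h₂ hX₂).1) (List.mem_append_left _ hb₁)
      rw [(varOcc_bl_of_notMem h₁ hX₁).2, (varOcc_bl_of_notMem h₂ hX₂).2]
    have hfree₁ : ∀ Y ∈ ufv ψ₁, Y ∉ ubinderNames ψ₁ := fun Y hY hb =>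
      hfree Y (.inl hY) (List.mem_append_left _ hb)
    have hfree₂ : ∀ Y ∈ ufv ψ₂, Y ∉ ubinderNames ψ₂ := fun Y hY hb =>
      hfree Y (.inr hY) (List.mem_append_right _ hb)
    rcases VarOcc.of_or h with h | h <;> rcases VarOcc.of_or h' with h' | h'
    · exact ih₁ hnd₁ hfree₁ h h'
    · exact cross h h'
    · exact (cross h' h).symm
    · exact ih₂ hnd₂ hfree₂ h h'
  | neg ψ₀ ih => exact ih hnd hfree (VarOcc.of_neg h) (VarOcc.of_neg h')
  | dia a ψ₀ ih => exact ih hnd hfree (VarOcc.of_dia h) (VarOcc.of_dia h')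
  | mu Y ψ₀ ih =>
    obtain ⟨hYψ₀, hnd₀⟩ := List.nodup_cons.1 hnd
    have hfree₀ : ∀ Z ∈ ufv ψ₀, Z ∉ ubinderNames ψ₀ := by
      intro Z hZ hb
      by_cases hZY : Z = Y
      · exact hYψ₀ (hZY ▸ hb)
      · exact hfree Z ⟨hZ, hZY⟩ (List.mem_cons_of_mem _ hb)
    obtain ⟨K, -, -, hbl⟩ := bl_mu_eq Y ψ₀ b k γ
    rw [hbl] at h h'
    have hlabelY : ∀ {i}, VarOcc (.mu Y K (bl ψ₀ true K (Function.update γ Y K))) Y i → i = K := by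
      intro i hi
      rcases VarOcc.of_mu hi with ⟨-, rfl⟩ | hi
      · rfl
      · simpa using (varOcc_bl_of_notMem hi hYψ₀).2
    by_cases hXY : X = Y
    · subst hXY
      rw [hlabelY h, hlabelY h']
    · have of_body := fun {i} (hi : VarOcc (.mu Y K (bl ψ₀ true K (Function.update γ Y K))) X i) =>
        (VarOcc.of_mu hi).resolve_left fun hX => hXY hX.1
      exact ih hnd₀ hfree₀ (of_body h) (of_body h')

end Labelling

/-- The block-labelling `bl(φ, tt, 0, γ)` of a closed unlabelled formula in
disjunctive form with distinct bound variables is well-formed, and erasing its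
block labels yields `φ` back. -/
theorem bl_wellFormed {α χ : Type} [DecidableEq χ] (φ : UForm α χ)
    (hclosed : ufv φ = ∅) (hdb : (ubinderNames φ).Nodup) (γ : χ → ℕ) :
    (∀ X k k', VarOcc (bl φ true 0 γ) X k → VarOcc (bl φ true 0 γ) X k' → k = k') ∧
    (∀ (b : Bool) (X : χ) (k : ℕ) (ψ : DForm α χ),
      SubNeg (bl φ true 0 γ) b (DForm.mu X k ψ) → (Even k ↔ b = true)) ∧
    (∀ (X : χ) (k : ℕ) (ψ : DForm α χ),
      Subf (bl φ true 0 γ) (DForm.mu X k ψ) →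
        ∀ p ∈ dfvD (DForm.mu X k ψ), p.2 ≤ k) ∧
    eraseD (bl φ true 0 γ) = φ := by
  have hfree : ∀ X ∈ ufv φ, X ∉ ubinderNames φ := by simp [hclosed]
  have hγ : ∀ X ∈ ufv φ, γ X ≤ 0 := by simp [hclosed]
  have hk : Even 0 ↔ true = true := by simp
  refine ⟨fun X k k' => varOcc_bl_unique hdb hfree, fun b X k ψ h => ?_,
    fun X k ψ ⟨b, h⟩ => ?_, eraseD_bl φ true 0 γ⟩
  · exact (subNeg_bl_mu_wellLabelled hk hγ h).1
  · exact (subNeg_bl_mu_wellLabelled hk hγ h).2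
end
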